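/- Let d > 0 be a real number and let h : ℝ → ℝ be continuous and integrable. Set u := p_d ∗ h. Then u is differentiable and for every x ∈ ℝ: u(x) + √d·u'(x) = (1/√d)·e^{x/√d} ∫_x^{+∞} e^{−ξ/√d} h(ξ) dξ, and u(x) − √d·u'(x) = (1/√d)·e^{−x/√d} ∫_{−∞}^x e^{ξ/√d} h(ξ) dξ. -/

import Mathlib

/-- The kernel `p_d(x) = (1/(2√d)) exp(-|x|/√d)`. -/
noncomputable def pd (d : ℝ) (x : ℝ) : ℝ :=
  1 / (2 * Real.sqrt d) * Real.exp (-|x| / Real.sqrt d)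

/-!
Splitting the convolution at `ξ = x` writes `u = (e^{x/√d} R + e^{-x/√d} L) / (2√d)`,
where `R x = ∫_x^∞ e^{-ξ/√d} h` and `L x = ∫_{-∞}^x e^{ξ/√d} h` (`rightExpIntegral` and
`leftExpIntegral` below). By the fundamental theorem of calculus `R' = -e^{-x/√d} h` and
`L' = e^{x/√d} h`, so the `h`-terms cancel in `u'`, and `u ± √d u'` isolates one of the two
summands.
-/

open MeasureTheory Set Filter Real

section TailIntegrals

variable {E : Type*} [NormedAddCommGroup E] [NormedSpace ℝ E] [CompleteSpace E] {g : ℝ → E}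

theorem hasDerivAt_setIntegral_Ioi {a x : ℝ} (hg : IntegrableOn g (Ioi a)) (hax : a < x)
    (hgx : ContinuousAt g x) : HasDerivAt (fun y => ∫ ξ in Ioi y, g ξ) (-g x) x := by
  have hFTC : HasDerivAt (fun y => ∫ ξ in a..y, g ξ) (g x) x :=
    intervalIntegral.integral_hasDerivAt_right
      ((intervalIntegrable_iff_integrableOn_Ioc_of_le hax.le).2 (hg.mono_set Ioc_subset_Ioi_self))
      (AEStronglyMeasurable.stronglyMeasurableAtFilter_of_mem hg.aestronglyMeasurable
        (Ioi_mem_nhds hax)) hgx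
  refine (hFTC.const_sub (∫ ξ in Ioi a, g ξ)).congr_of_eventuallyEq ?_
  filter_upwards [Ioi_mem_nhds hax] with y hy
  exact (sub_eq_of_eq_add' (intervalIntegral.integral_interval_add_Ioi hg
    (hg.mono_set (Ioi_subset_Ioi hy.le))).symm).symm

theorem hasDerivAt_setIntegral_Iic {b x : ℝ} (hg : IntegrableOn g (Iic b)) (hxb : x < b)
    (hgx : ContinuousAt g x) : HasDerivAt (fun y => ∫ ξ in Iic y, g ξ) (g x) x := by
  have hFTC : HasDerivAt (fun y => ∫ ξ in b..y, g ξ) (g x) x :=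
    intervalIntegral.integral_hasDerivAt_right
      ((intervalIntegrable_iff_integrableOn_Ioc_of_le hxb.le).2
        (hg.mono_set Ioc_subset_Iic_self)).symm
      (AEStronglyMeasurable.stronglyMeasurableAtFilter_of_mem hg.aestronglyMeasurable
        (Iic_mem_nhds hxb)) hgx
  refine (hFTC.const_add (∫ ξ in Iic b, g ξ)).congr_of_eventuallyEq ?_
  filter_upwards [Iio_mem_nhds hxb] with y hy
  exact eq_add_of_sub_eq'
    (intervalIntegral.integral_Iic_sub_Iic hg (hg.mono_set (Iic_subset_Iic.2 hy.le)))

end TailIntegrals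

section ExpWeightedTails

variable {s : ℝ} {h : ℝ → ℝ}

noncomputable def rightExpIntegral (s : ℝ) (h : ℝ → ℝ) (x : ℝ) : ℝ :=
  ∫ ξ in Ioi x, exp (-ξ / s) * h ξ

noncomputable def leftExpIntegral (s : ℝ) (h : ℝ → ℝ) (x : ℝ) : ℝ :=
  ∫ ξ in Iic x, exp (ξ / s) * h ξ

theorem integrableOn_exp_neg_div_mul_Ioi (hs : 0 ≤ s) (hi : Integrable h) (a : ℝ) :
    IntegrableOn (fun ξ => exp (-ξ / s) * h ξ) (Ioi a) := by
  refine hi.restrict.bdd_mul (c := exp (-a / s)) (by fun_prop) ?_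
  filter_upwards [ae_restrict_mem measurableSet_Ioi] with ξ (hξ : a < ξ)
  rw [norm_of_nonneg (exp_pos _).le, exp_le_exp]
  exact div_le_div_of_nonneg_right (neg_le_neg hξ.le) hs

theorem integrableOn_exp_div_mul_Iic (hs : 0 ≤ s) (hi : Integrable h) (a : ℝ) :
    IntegrableOn (fun ξ => exp (ξ / s) * h ξ) (Iic a) := by
  refine hi.restrict.bdd_mul (c := exp (a / s)) (by fun_prop) ?_
  filter_upwards [ae_restrict_mem measurableSet_Iic] with ξ (hξ : ξ ≤ a)
  rw [norm_of_nonneg (exp_pos _).le, exp_le_exp]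
  exact div_le_div_of_nonneg_right hξ hs

theorem hasDerivAt_rightExpIntegral (hs : 0 ≤ s) (hc : Continuous h) (hi : Integrable h)
    (x : ℝ) : HasDerivAt (rightExpIntegral s h) (-(exp (-x / s) * h x)) x :=
  hasDerivAt_setIntegral_Ioi (integrableOn_exp_neg_div_mul_Ioi hs hi (x - 1)) (by linarith)
    (by fun_prop)

theorem hasDerivAt_leftExpIntegral (hs : 0 ≤ s) (hc : Continuous h) (hi : Integrable h)
    (x : ℝ) : HasDerivAt (leftExpIntegral s h) (exp (x / s) * h x) x :=
  hasDerivAt_setIntegral_Iic (integrableOn_exp_div_mul_Iic hs hi (x + 1)) (by linarith)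
    (by fun_prop)

end ExpWeightedTails

section Kernel

variable {d : ℝ} {h : ℝ → ℝ}

theorem continuous_pd : Continuous (pd d) := by
  unfold pd; fun_prop

theorem norm_pd_le (x : ℝ) : ‖pd d x‖ ≤ 1 / (2 * √d) := by
  have hexp : exp (-|x| / √d) ≤ 1 :=
    exp_le_one_iff.2 <|
      div_nonpos_of_nonpos_of_nonneg (neg_nonpos.2 (abs_nonneg x)) (sqrt_nonneg d)
  rw [pd, norm_of_nonneg (by positivity)]
  exact mul_le_of_le_one_right (by positivity) hexp

theorem pd_sub_eq_of_le {x ξ : ℝ} (hξ : ξ ≤ x) :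
    pd d (x - ξ) = 1 / (2 * √d) * exp (-x / √d) * exp (ξ / √d) := by
  rw [pd, abs_of_nonneg (sub_nonneg.2 hξ), mul_assoc, ← exp_add]
  ring_nf

theorem pd_sub_eq_of_ge {x ξ : ℝ} (hξ : x ≤ ξ) :
    pd d (x - ξ) = 1 / (2 * √d) * exp (x / √d) * exp (-ξ / √d) := by
  rw [pd, abs_of_nonpos (sub_nonpos.2 hξ), mul_assoc, ← exp_add]
  ring_nf

theorem integrable_pd_sub_mul (hi : Integrable h) (x : ℝ) :
    Integrable fun ξ => pd d (x - ξ) * h ξ :=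
  hi.bdd_mul (continuous_pd.comp (continuous_sub_left x)).aestronglyMeasurable
    (Eventually.of_forall fun ξ => norm_pd_le (x - ξ))

theorem integral_pd_sub_mul_eq (hi : Integrable h) (x : ℝ) :
    ∫ ξ, pd d (x - ξ) * h ξ = 1 / (2 * √d) *
      (exp (x / √d) * rightExpIntegral √d h x + exp (-x / √d) * leftExpIntegral √d h x) := by
  have hint := integrable_pd_sub_mul (d := d) hi x
  have hleft : ∫ ξ in Iic x, pd d (x - ξ) * h ξ
      = 1 / (2 * √d) * exp (-x / √d) * leftExpIntegral √d h x := by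
    rw [leftExpIntegral, ← integral_const_mul]
    refine setIntegral_congr_fun measurableSet_Iic fun ξ (hξ : ξ ≤ x) => ?_
    rw [pd_sub_eq_of_le hξ, mul_assoc]
  have hright : ∫ ξ in Ioi x, pd d (x - ξ) * h ξ
      = 1 / (2 * √d) * exp (x / √d) * rightExpIntegral √d h x := by
    rw [rightExpIntegral, ← integral_const_mul]
    refine setIntegral_congr_fun measurableSet_Ioi fun ξ (hξ : x < ξ) => ?_
    rw [pd_sub_eq_of_ge hξ.le, mul_assoc]
  rw [← intervalIntegral.integral_Iic_add_Ioi hint.integrableOn hint.integrableOn,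
    hleft, hright]
  ring

theorem hasDerivAt_integral_pd_sub_mul (hc : Continuous h) (hi : Integrable h) (x : ℝ) :
    HasDerivAt (fun x => ∫ ξ, pd d (x - ξ) * h ξ)
      (1 / (2 * √d) * (1 / √d) *
        (exp (x / √d) * rightExpIntegral √d h x - exp (-x / √d) * leftExpIntegral √d h x)) x := by
  set s := √d
  have hexp : HasDerivAt (fun y => exp (y / s)) (exp (x / s) * (1 / s)) x := by
    simpa using ((hasDerivAt_id x).div_const s).exp
  have hexp_neg : HasDerivAt (fun y => exp (-y / s)) (exp (-x / s) * (-1 / s)) x := by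
    simpa [neg_div] using ((hasDerivAt_id x).neg.div_const s).exp
  have hR := hexp.mul (hasDerivAt_rightExpIntegral (sqrt_nonneg d) hc hi x)
  have hL := hexp_neg.mul (hasDerivAt_leftExpIntegral (sqrt_nonneg d) hc hi x)
  rw [funext (integral_pd_sub_mul_eq hi)]
  refine ((hR.add hL).const_mul (1 / (2 * s))).congr_deriv ?_
  ring

end Kernel

/-- **One-sided exponential average representations of `(1 ± √d ∂ₓ)(1 - d∂ₓ²)⁻¹`.**
For `h` continuous and integrable and `u := p_d ∗ h`,
`u + √d u' = (1/√d) e^{x/√d} ∫_x^∞ e^{-ξ/√d} h(ξ) dξ` and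
`u - √d u' = (1/√d) e^{-x/√d} ∫_{-∞}^x e^{ξ/√d} h(ξ) dξ`. -/
theorem one_sided_exponential_averages (d : ℝ) (hd : 0 < d) (h : ℝ → ℝ)
    (hc : Continuous h) (hi : MeasureTheory.Integrable h)
    (u : ℝ → ℝ) (hu : u = fun x => ∫ ξ : ℝ, pd d (x - ξ) * h ξ) :
    Differentiable ℝ u ∧
    ∀ x : ℝ,
      u x + Real.sqrt d * deriv u x
        = (1 / Real.sqrt d) * Real.exp (x / Real.sqrt d)
          * ∫ ξ in Set.Ioi x, Real.exp (-ξ / Real.sqrt d) * h ξ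
      ∧ u x - Real.sqrt d * deriv u x
        = (1 / Real.sqrt d) * Real.exp (-x / Real.sqrt d)
          * ∫ ξ in Set.Iio x, Real.exp (ξ / Real.sqrt d) * h ξ := by
  subst hu
  have hderiv := hasDerivAt_integral_pd_sub_mul (d := d) hc hi
  refine ⟨fun x => (hderiv x).differentiableAt, fun x => ?_⟩
  have hs : √d ≠ 0 := (sqrt_pos.2 hd).ne'
  have hIio : ∫ ξ in Iio x, exp (ξ / √d) * h ξ = leftExpIntegral √d h x :=
    setIntegral_congr_set Iio_ae_eq_Iic
  rw [(hderiv x).deriv]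
  beta_reduce
  rw [integral_pd_sub_mul_eq hi, hIio, ← rightExpIntegral]
  constructor <;> (field_simp; ring)
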